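/- arXiv:0710.0491 — 2 statements merged into one kernel-verified Lean document; each statement's English description precedes it below -/
import Mathlib

section
/- Let d ≥ 1, let S ⊆ {1,…,d} be nonempty, and for each i ∈ S let h_i = 2^{−l_i} with l_i ∈ ℕ. Let I^{(S)} = {x ∈ [0,1]^d : x_i/h_i ∈ ℤ for all i ∈ S}. Suppose f : I^{(S)} → ℝ is bounded and u : I^{(S)} → ℝ is continuous on I^{(S)}, has continuous second partial derivatives ∂_i²u for i ∉ S at all points of I^{(S)} with all coordinates in (0,1), vanishes at every point of I^{(S)} having some coordinate equal to 0 or 1, and satisfies the semi-discrete equation Σ_{i∈S} (u(x+h_i e_i) − 2u(x) + u(x−h_i e_i))/h_i² + Σ_{i∉S} ∂_i²u(x) = f(x) at every x ∈ I^{(S)} with all coordinates in (0,1). Then sup_{x∈I^{(S)}} |u(x)| ≤ (1/8)·sup |f|. -/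
/-- Partial derivative of `u` in direction `i` (one-sided within `[0,1]` at the
boundary): `∂ᵢu(x) = d/dt u(x₁,…,t,…,x_d)|_{t = xᵢ}` taken within `[0,1]`. -/
noncomputable def pd (d : ℕ) (i : Fin d) (u : (Fin d → ℝ) → ℝ) : (Fin d → ℝ) → ℝ :=
  fun x => derivWithin (fun t => u (Function.update x i t)) (Set.Icc 0 1) (x i)

/-- Mixed partial derivative `D^α u = ∂₁^{α₁} ⋯ ∂_d^{α_d} u`. -/
noncomputable def mderiv (d : ℕ) (α : Fin d → ℕ) (u : (Fin d → ℝ) → ℝ) :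
    (Fin d → ℝ) → ℝ :=
  (List.finRange d).foldr (fun i v => (pd d i)^[α i] v) u

/-- The closed unit cube `[0,1]^d`. -/
def unitCube (d : ℕ) : Set (Fin d → ℝ) := Set.Icc 0 1

/-- The open unit cube `(0,1)^d`. -/
def openCube (d : ℕ) : Set (Fin d → ℝ) := Set.pi Set.univ fun _ => Set.Ioo (0 : ℝ) 1

/-- The boundary `∂[0,1]^d`. -/
def cubeBdry (d : ℕ) : Set (Fin d → ℝ) := {x ∈ unitCube d | ∃ i, x i = 0 ∨ x i = 1}

/-- All mixed partial derivatives `D^β f`, `β ≤ α`, exist on `s` (each step of the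
iterated differentiation is differentiable within `[0,1]` in its direction). -/
def HasDerivsOn (d : ℕ) (α : Fin d → ℕ) (f : (Fin d → ℝ) → ℝ)
    (s : Set (Fin d → ℝ)) : Prop :=
  ∀ β : Fin d → ℕ, (∀ i, β i ≤ α i) → ∀ i : Fin d, β i < α i → ∀ x ∈ s,
    DifferentiableWithinAt ℝ (fun t => mderiv d β f (Function.update x i t))
      (Set.Icc 0 1) (x i)

/-- `u ∈ X_k^d`: all mixed derivatives `D^α u`, `α ∈ {0,…,k}^d`, exist, are
continuous on `[0,1]^d` and vanish on the boundary. -/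
def MemX (d k : ℕ) (u : (Fin d → ℝ) → ℝ) : Prop :=
  HasDerivsOn d (fun _ => k) u (unitCube d) ∧
  ∀ α : Fin d → ℕ, (∀ i, α i ≤ k) →
    ContinuousOn (mderiv d α u) (unitCube d) ∧
    ∀ x ∈ cubeBdry d, mderiv d α u x = 0

/-- `u ∈ X_k^d(K)`: additionally all these derivatives are bounded by `K`. -/
def MemXb (d k : ℕ) (K : ℝ) (u : (Fin d → ℝ) → ℝ) : Prop :=
  MemX d k u ∧
  ∀ α : Fin d → ℕ, (∀ i, α i ≤ k) → ∀ x ∈ unitCube d, |mderiv d α u x| ≤ K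

/-- Mesh size `h_k = 2^{-lvl_k}` attached to a level vector. -/
noncomputable def hmesh (d : ℕ) (lvl : Fin d → ℕ) (k : Fin d) : ℝ := ((2 : ℝ) ^ lvl k)⁻¹

/-- The grid point with index `i` on the grid of level `lvl`. -/
noncomputable def gridpt (d : ℕ) (lvl : Fin d → ℕ) (i : Fin d → ℕ) : Fin d → ℝ :=
  fun k => (i k : ℝ) * hmesh d lvl k

/-- Valid grid indices: `0 ≤ i_k ≤ 2^{lvl_k}`. -/
def IsGridIdx (d : ℕ) (lvl : Fin d → ℕ) (i : Fin d → ℕ) : Prop := ∀ k, i k ≤ 2 ^ lvl k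

/-- The hyperplane set `I^{(J)} = {x ∈ [0,1]^d : x_j/h_j ∈ ℤ for j ∈ J}`. -/
def Iplane (d : ℕ) (J : Finset (Fin d)) (lvl : Fin d → ℕ) : Set (Fin d → ℝ) :=
  {x ∈ unitCube d | ∀ j ∈ J, ∃ m : ℤ, x j = (m : ℝ) * hmesh d lvl j}

/-- `U` is the central finite difference solution of the Poisson problem `Δu = f`
with zero Dirichlet data on the grid of level `lvl`. -/
def IsFDPoisson (d : ℕ) (lvl : Fin d → ℕ) (f : (Fin d → ℝ) → ℝ)
    (U : (Fin d → ℕ) → ℝ) : Prop :=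
  (∀ i : Fin d → ℕ, IsGridIdx d lvl i → (∃ k, i k = 0 ∨ i k = 2 ^ lvl k) → U i = 0) ∧
  (∀ i : Fin d → ℕ, (∀ k, 1 ≤ i k ∧ i k < 2 ^ lvl k) →
    ∑ k, (U (Function.update i k (i k + 1)) - 2 * U i + U (Function.update i k (i k - 1)))
        / hmesh d lvl k ^ 2
      = f (gridpt d lvl i))

/-- `U` is the upwind (implicit Euler) solution of the advection equation
`Σᵢ ∂ᵢu = 0` on the grid of level `lvl`, with inflow data given by `u`. -/
def IsUpwindSol (d : ℕ) (lvl : Fin d → ℕ) (u : (Fin d → ℝ) → ℝ)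
    (U : (Fin d → ℕ) → ℝ) : Prop :=
  (∀ i : Fin d → ℕ, IsGridIdx d lvl i → (∃ k, i k = 0) → U i = u (gridpt d lvl i)) ∧
  (∀ i : Fin d → ℕ, IsGridIdx d lvl i → (∀ k, 1 ≤ i k) →
    ∑ k, (U i - U (Function.update i k (i k - 1))) / hmesh d lvl k = 0)

/-- `g` is the multilinear interpolant of the grid function `U` on the grid of
level `lvl`: it agrees with `U` at all grid points and is a polynomial of degree
at most `1` in each variable on each grid cell. -/
def IsInterp (d : ℕ) (lvl : Fin d → ℕ) (U : (Fin d → ℕ) → ℝ)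
    (g : (Fin d → ℝ) → ℝ) : Prop :=
  (∀ i : Fin d → ℕ, IsGridIdx d lvl i → g (gridpt d lvl i) = U i) ∧
  (∀ j : Fin d → ℕ, (∀ k, j k < 2 ^ lvl k) →
    ∃ c : Finset (Fin d) → ℝ, ∀ x : Fin d → ℝ,
      (∀ k, (j k : ℝ) * hmesh d lvl k ≤ x k ∧ x k ≤ ((j k : ℝ) + 1) * hmesh d lvl k) →
      g x = ∑ T : Finset (Fin d), c T * ∏ k ∈ T, x k)

/-- The domain `{x : x ± h e_k ∈ [0,1]^d}` of the truncation error terms. -/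
def diffDom (d : ℕ) (k : Fin d) (h : ℝ) : Set (Fin d → ℝ) :=
  {x | Function.update x k (x k + h) ∈ unitCube d ∧
       Function.update x k (x k - h) ∈ unitCube d}

/-! For `j ∈ S` the barrier `b(x) = x_j (1 - x_j) / 2` satisfies `A_h^{(S)} b = -1`: its second
difference quotient in direction `j` is exactly `-1`, and it is constant in all other directions.
Let `|A_h^{(S)} u| ≤ M < c`. At an interior minimum of `u + c b` over `I^{(S)}` every second
difference quotient of `u + c b`, and every second derivative in a direction outside `S`, is
nonnegative, which forces `A_h^{(S)} u ≥ c`. So the minimum lies on the boundary, where `u = 0`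
and `b ≥ 0`; hence `u ≥ -c b`. Applying this to `-u` and letting `c → M` gives
`|u| ≤ M b ≤ M / 8`. -/

open Set Filter Topology Function

theorem IsLocalMin.deriv_deriv_nonneg {f : ℝ → ℝ} {a : ℝ} (hmin : IsLocalMin f a)
    (hc : ContinuousAt f a) : 0 ≤ deriv (deriv f) a := by
  -- If `deriv (deriv f) a < 0`, the second-derivative test makes `a` also a local maximum,
  -- so `f` is locally constant near `a`.
  by_contra! hneg
  have hmax : IsLocalMax f a := isLocalMax_of_deriv_deriv_neg hneg hmin.deriv_eq_zero hc
  have hconst : f =ᶠ[𝓝 a] fun _ => f a := by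
    filter_upwards [hmin, hmax] with t ht₁ ht₂ using le_antisymm ht₂ ht₁
  have : deriv (deriv f) a = 0 := by
    rw [hconst.deriv.deriv_eq]
    simp
  exact hneg.ne this

lemma hmesh_pos (d : ℕ) (lvl : Fin d → ℕ) (k : Fin d) : 0 < hmesh d lvl k := by
  unfold hmesh; positivity

lemma mem_unitCube_iff {d : ℕ} {x : Fin d → ℝ} :
    x ∈ unitCube d ↔ ∀ k, 0 ≤ x k ∧ x k ≤ 1 :=
  ⟨fun h k => ⟨h.1 k, h.2 k⟩, fun h => ⟨fun k => (h k).1, fun k => (h k).2⟩⟩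

lemma zero_mem_Iplane (d : ℕ) (S : Finset (Fin d)) (lvl : Fin d → ℕ) :
    (0 : Fin d → ℝ) ∈ Iplane d S lvl :=
  ⟨mem_unitCube_iff.mpr fun _ => by norm_num, fun _ _ => ⟨0, by simp⟩⟩

lemma Iplane_eq_inter_zmultiples (d : ℕ) (S : Finset (Fin d)) (lvl : Fin d → ℕ) :
    Iplane d S lvl =
      unitCube d ∩ ⋂ j ∈ S, (fun x => x j) ⁻¹' AddSubgroup.zmultiples (hmesh d lvl j) := by
  ext x
  simp only [Iplane, mem_ofPred_eq, mem_inter_iff, mem_iInter, mem_preimage, SetLike.mem_coe,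
    AddSubgroup.mem_zmultiples_iff, zsmul_eq_mul, eq_comm]

lemma isCompact_Iplane (d : ℕ) (S : Finset (Fin d)) (lvl : Fin d → ℕ) :
    IsCompact (Iplane d S lvl) := by
  rw [Iplane_eq_inter_zmultiples]
  refine isCompact_Icc.inter_right (isClosed_biInter fun j _ => ?_)
  exact AddSubgroup.isClosed_of_discrete.preimage (continuous_apply j)

section Iplane

variable {d : ℕ} {S : Finset (Fin d)} {lvl : Fin d → ℕ} {x : Fin d → ℝ}

lemma update_mem_Iplane (hx : x ∈ Iplane d S lvl) (i : Fin d) {t : ℝ} (ht : t ∈ Icc 0 1)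
    (hdiv : i ∈ S → ∃ m : ℤ, t = m * hmesh d lvl i) :
    update x i t ∈ Iplane d S lvl := by
  refine ⟨mem_unitCube_iff.mpr fun k => ?_, fun k hk => ?_⟩
  · rcases eq_or_ne k i with rfl | hki
    · simpa using ht
    · simpa [hki] using mem_unitCube_iff.mp hx.1 k
  · rcases eq_or_ne k i with rfl | hki
    · simpa using hdiv hk
    · simpa [hki] using hx.2 k hk

lemma update_add_hmesh_mem_Iplane (hx : x ∈ Iplane d S lvl) {i : Fin d} (hi : i ∈ S)
    (hx1 : x i < 1) : update x i (x i + hmesh d lvl i) ∈ Iplane d S lvl := by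
  obtain ⟨m, hm⟩ := hx.2 i hi
  have hh := hmesh_pos d lvl i
  have hone : (2 : ℝ) ^ lvl i * hmesh d lvl i = 1 := by simp [hmesh]
  have hm_lt : m < (2 : ℤ) ^ lvl i := by
    have : (m : ℝ) < 2 ^ lvl i := by nlinarith
    exact_mod_cast this
  have hm_le : (m : ℝ) + 1 ≤ 2 ^ lvl i := by exact_mod_cast hm_lt
  refine update_mem_Iplane hx i ⟨by nlinarith [(mem_unitCube_iff.mp hx.1 i).1], by nlinarith⟩
    fun _ => ⟨m + 1, by push_cast; linarith⟩

lemma update_sub_hmesh_mem_Iplane (hx : x ∈ Iplane d S lvl) {i : Fin d} (hi : i ∈ S)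
    (hx0 : 0 < x i) : update x i (x i - hmesh d lvl i) ∈ Iplane d S lvl := by
  obtain ⟨m, hm⟩ := hx.2 i hi
  have hh := hmesh_pos d lvl i
  have hm_pos : 0 < m := by
    have : (0 : ℝ) < m := by nlinarith
    exact_mod_cast this
  have hm_ge : (1 : ℝ) ≤ m := by exact_mod_cast hm_pos
  refine update_mem_Iplane hx i ⟨by nlinarith, by linarith [(mem_unitCube_iff.mp hx.1 i).2]⟩
    fun _ => ⟨m - 1, by push_cast; linarith⟩

end Iplane

section PartialDeriv

variable {d : ℕ} {i : Fin d} {u : (Fin d → ℝ) → ℝ} {x : Fin d → ℝ}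

lemma pd_neg : pd d i (fun y => -u y) = fun y => -pd d i u y := by
  funext y
  exact derivWithin.fun_neg

lemma pd_pd_eq_deriv_deriv (hx : x i ∈ Ioo 0 1) :
    pd d i (pd d i u) x = deriv (deriv fun t => u (update x i t)) (x i) := by
  have hline : (fun t => pd d i u (update x i t)) =ᶠ[𝓝 (x i)] deriv fun t => u (update x i t) := by
    filter_upwards [Ioo_mem_nhds hx.1 hx.2] with t ht
    simp only [pd, update_idem, update_self]
    exact derivWithin_of_mem_nhds (Icc_mem_nhds ht.1 ht.2)
  rw [← hline.deriv_eq]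
  exact derivWithin_of_mem_nhds (Icc_mem_nhds hx.1 hx.2)

lemma pd_pd_nonneg_of_isMinOn (hx : x i ∈ Ioo 0 1)
    (hc : ContinuousOn (fun t => u (update x i t)) (Icc 0 1))
    (hmin : IsMinOn (fun t => u (update x i t)) (Icc 0 1) (x i)) :
    0 ≤ pd d i (pd d i u) x := by
  have hnhds : Icc (0 : ℝ) 1 ∈ 𝓝 (x i) := Icc_mem_nhds hx.1 hx.2
  rw [pd_pd_eq_deriv_deriv hx]
  exact (hmin.isLocalMin hnhds).deriv_deriv_nonneg (hc.continuousAt hnhds)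

end PartialDeriv

noncomputable def barrier {d : ℕ} (j : Fin d) (x : Fin d → ℝ) : ℝ := x j * (1 - x j) / 2

section Barrier

variable {d : ℕ} {j : Fin d} {x : Fin d → ℝ}

lemma barrier_nonneg (hx : x ∈ unitCube d) : 0 ≤ barrier j x := by
  obtain ⟨h0, h1⟩ := mem_unitCube_iff.mp hx j
  unfold barrier
  nlinarith

lemma barrier_le_one_eighth : barrier j x ≤ 1 / 8 := by
  unfold barrier
  nlinarith [sq_nonneg (x j - 1 / 2)]

lemma barrier_update_of_ne {i : Fin d} (hij : i ≠ j) (t : ℝ) :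
    barrier j (update x i t) = barrier j x := by
  simp [barrier, update_of_ne hij.symm]

lemma barrier_second_diff (h : ℝ) :
    barrier j (update x j (x j + h)) - 2 * barrier j x + barrier j (update x j (x j - h)) =
      -h ^ 2 := by
  simp only [barrier, update_self]
  ring

end Barrier

/-- The semi-discrete operator `A_h^{(S)}`. -/
noncomputable def sdLaplacian (d : ℕ) (S : Finset (Fin d)) (lvl : Fin d → ℕ)
    (u : (Fin d → ℝ) → ℝ) (x : Fin d → ℝ) : ℝ :=
  (∑ i ∈ S, (u (update x i (x i + hmesh d lvl i)) - 2 * u x +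
      u (update x i (x i - hmesh d lvl i))) / hmesh d lvl i ^ 2) +
    ∑ i ∈ Sᶜ, pd d i (pd d i u) x

lemma sdLaplacian_neg (d : ℕ) (S : Finset (Fin d)) (lvl : Fin d → ℕ) (u : (Fin d → ℝ) → ℝ)
    (x : Fin d → ℝ) : sdLaplacian d S lvl (fun y => -u y) x = -sdLaplacian d S lvl u x := by
  simp only [sdLaplacian, pd_neg, neg_add, ← Finset.sum_neg_distrib]
  congr 1
  refine Finset.sum_congr rfl fun i _ => ?_
  ring

lemma mem_unitCube_boundary_or_interior {d : ℕ} {x : Fin d → ℝ} (hx : x ∈ unitCube d) :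
    (∃ i, x i = 0 ∨ x i = 1) ∨ ∀ i, 0 < x i ∧ x i < 1 := by
  by_contra! h
  obtain ⟨hbdry, i, hi⟩ := h
  obtain ⟨h0, h1⟩ := mem_unitCube_iff.mp hx i
  rcases h0.eq_or_lt with h0 | h0
  · exact (hbdry i).1 h0.symm
  · exact (hbdry i).2 (le_antisymm h1 (hi h0))

section MaximumPrinciple

variable {d : ℕ} {S : Finset (Fin d)} {lvl : Fin d → ℕ} {u : (Fin d → ℝ) → ℝ}
  {j : Fin d} {c M : ℝ}

lemma le_sdLaplacian_of_isMinOn (hj : j ∈ S) (hcont : ContinuousOn u (Iplane d S lvl))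
    {x : Fin d → ℝ} (hx : x ∈ Iplane d S lvl) (hint : ∀ i, 0 < x i ∧ x i < 1)
    (hmin : IsMinOn (fun y => u y + c * barrier j y) (Iplane d S lvl) x) :
    c ≤ sdLaplacian d S lvl u x := by
  have hdisc : ∀ i ∈ S, (if i = j then c else 0) ≤
      (u (update x i (x i + hmesh d lvl i)) - 2 * u x +
        u (update x i (x i - hmesh d lvl i))) / hmesh d lvl i ^ 2 := by
    intro i hi
    have hh := hmesh_pos d lvl i
    have hplus := hmin (update_add_hmesh_mem_Iplane hx hi (hint i).2)
    have hminus := hmin (update_sub_hmesh_mem_Iplane hx hi (hint i).1)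
    simp only [mem_ofPred_eq] at hplus hminus
    rw [le_div_iff₀ (by positivity)]
    split_ifs with hij
    · subst hij
      linear_combination hplus + hminus + c * barrier_second_diff (j := i) (x := x) (hmesh d lvl i)
    · simp only [barrier_update_of_ne hij] at hplus hminus
      linarith
  have hcts : ∀ i ∈ Sᶜ, 0 ≤ pd d i (pd d i u) x := by
    intro i hi
    have hi : i ∉ S := Finset.mem_compl.mp hi
    have hline : MapsTo (fun t => update x i t) (Icc 0 1) (Iplane d S lvl) :=
      fun t ht => update_mem_Iplane hx i ht (absurd · hi)
    have hupdate : Continuous fun t => update x i t := by fun_prop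
    refine pd_pd_nonneg_of_isMinOn (hint i) (hcont.comp hupdate.continuousOn hline)
      fun t ht => ?_
    have hmin_t := hmin (hline ht)
    simp only [mem_ofPred_eq, barrier_update_of_ne (ne_of_mem_of_not_mem hj hi).symm,
      update_eq_self] at hmin_t ⊢
    linarith
  calc c = ∑ i ∈ S, if i = j then c else 0 := by simp [hj]
    _ ≤ sdLaplacian d S lvl u x :=
      le_add_of_le_of_nonneg (Finset.sum_le_sum hdisc) (Finset.sum_nonneg hcts)

lemma neg_mul_barrier_le (hj : j ∈ S) (hcont : ContinuousOn u (Iplane d S lvl))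
    (hzero : ∀ x ∈ Iplane d S lvl, (∃ i, x i = 0 ∨ x i = 1) → u x = 0)
    (hL : ∀ x ∈ Iplane d S lvl, (∀ i, 0 < x i ∧ x i < 1) → sdLaplacian d S lvl u x ≤ M)
    (hc : 0 ≤ c) (hMc : M < c) :
    ∀ x ∈ Iplane d S lvl, -(c * barrier j x) ≤ u x := by
  have hvcont : ContinuousOn (fun y => u y + c * barrier j y) (Iplane d S lvl) :=
    hcont.add (continuousOn_const.mul (by unfold barrier; fun_prop))
  obtain ⟨x₀, hx₀, hmin⟩ :=
    (isCompact_Iplane d S lvl).exists_isMinOn ⟨0, zero_mem_Iplane d S lvl⟩ hvcont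
  intro x hx
  have hx₀x := hmin hx
  simp only [mem_ofPred_eq] at hx₀x
  rcases mem_unitCube_boundary_or_interior hx₀.1 with hbdry | hint
  · have := mul_nonneg hc (barrier_nonneg (j := j) hx₀.1)
    linarith [hzero x₀ hx₀ hbdry]
  · exact absurd ((le_sdLaplacian_of_isMinOn hj hcont hx₀ hint hmin).trans (hL x₀ hx₀ hint))
      hMc.not_ge

lemma abs_le_mul_barrier (hj : j ∈ S) (hcont : ContinuousOn u (Iplane d S lvl))
    (hzero : ∀ x ∈ Iplane d S lvl, (∃ i, x i = 0 ∨ x i = 1) → u x = 0) (hM : 0 ≤ M)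
    (hL : ∀ x ∈ Iplane d S lvl, (∀ i, 0 < x i ∧ x i < 1) → |sdLaplacian d S lvl u x| ≤ M) :
    ∀ x ∈ Iplane d S lvl, |u x| ≤ M * barrier j x := by
  intro x hx
  have hbound : ∀ c, M < c → |u x| ≤ c * barrier j x := by
    intro c hMc
    have hc : 0 ≤ c := hM.trans hMc.le
    have hlower := neg_mul_barrier_le hj hcont hzero
      (fun y hy hint => (le_abs_self _).trans (hL y hy hint)) hc hMc x hx
    have hupper := neg_mul_barrier_le (u := fun y => -u y) hj hcont.neg
      (fun y hy hbdry => by simp [hzero y hy hbdry])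
      (fun y hy hint => by rw [sdLaplacian_neg]; exact (neg_le_abs _).trans (hL y hy hint))
      hc hMc x hx
    exact abs_le.mpr ⟨by linarith, by linarith⟩
  have hev : ∀ᶠ c in 𝓝[>] M, |u x| ≤ c * barrier j x := eventually_nhdsWithin_of_forall hbound
  exact ge_of_tendsto (((continuous_id.mul continuous_const).tendsto M).mono_left
    nhdsWithin_le_nhds) hev

end MaximumPrinciple

theorem semidiscrete_sup_bound_general (d : ℕ)
    (S : Finset (Fin d)) (hS : S.Nonempty) (lvl : Fin d → ℕ)
    (f u : (Fin d → ℝ) → ℝ) (M : ℝ)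
    (hf : ∀ x ∈ Iplane d S lvl, |f x| ≤ M)
    (hcont : ContinuousOn u (Iplane d S lvl))
    (hzero : ∀ x ∈ Iplane d S lvl, (∃ i, x i = 0 ∨ x i = 1) → u x = 0)
    (heq : ∀ x ∈ Iplane d S lvl, (∀ j, 0 < x j ∧ x j < 1) →
      (∑ i ∈ S,
          (u (Function.update x i (x i + hmesh d lvl i)) - 2 * u x +
              u (Function.update x i (x i - hmesh d lvl i))) / hmesh d lvl i ^ 2)
        + (∑ i ∈ Sᶜ, pd d i (pd d i u) x) = f x) :
    ∀ x ∈ Iplane d S lvl, |u x| ≤ (1 / 8) * M := by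
  intro x hx
  obtain ⟨j, hj⟩ := hS
  have hM : 0 ≤ M := (abs_nonneg _).trans (hf 0 (zero_mem_Iplane d S lvl))
  have hL : ∀ y ∈ Iplane d S lvl, (∀ i, 0 < y i ∧ y i < 1) → |sdLaplacian d S lvl u y| ≤ M :=
    fun y hy hint => by
      rw [show sdLaplacian d S lvl u y = f y from heq y hy hint]; exact hf y hy
  calc |u x| ≤ M * barrier j x := abs_le_mul_barrier hj hcont hzero hM hL x hx
    _ ≤ M * (1 / 8) := mul_le_mul_of_nonneg_left barrier_le_one_eighth hM
    _ = 1 / 8 * M := mul_comm _ _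

/-- Semi-discrete maximum principle (Lemma `stability`, part 2): the solution of
the semi-discrete Poisson problem on the hyperplane set `I^{(S)}` is bounded by
`(1/8)·sup|f|`. -/
theorem semidiscrete_sup_bound (d : ℕ) (hd : 1 ≤ d)
    (S : Finset (Fin d)) (hS : S.Nonempty) (lvl : Fin d → ℕ)
    (f u : (Fin d → ℝ) → ℝ) (M : ℝ)
    (hf : ∀ x ∈ Iplane d S lvl, |f x| ≤ M)
    (hcont : ContinuousOn u (Iplane d S lvl))
    (hdiff : ∀ i : Fin d, i ∉ S → ∀ x ∈ Iplane d S lvl, (∀ j, 0 < x j ∧ x j < 1) →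
      DifferentiableWithinAt ℝ (fun t => u (Function.update x i t)) (Set.Icc 0 1) (x i) ∧
      DifferentiableWithinAt ℝ (fun t => pd d i u (Function.update x i t))
        (Set.Icc 0 1) (x i))
    (hcont2 : ∀ i : Fin d, i ∉ S →
      ContinuousOn (pd d i (pd d i u)) {x ∈ Iplane d S lvl | ∀ j, 0 < x j ∧ x j < 1})
    (hzero : ∀ x ∈ Iplane d S lvl, (∃ i, x i = 0 ∨ x i = 1) → u x = 0)
    (heq : ∀ x ∈ Iplane d S lvl, (∀ j, 0 < x j ∧ x j < 1) →
      (∑ i ∈ S,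
          (u (Function.update x i (x i + hmesh d lvl i)) - 2 * u x +
              u (Function.update x i (x i - hmesh d lvl i))) / hmesh d lvl i ^ 2)
        + (∑ i ∈ Sᶜ, pd d i (pd d i u) x) = f x) :
    ∀ x ∈ Iplane d S lvl, |u x| ≤ (1 / 8) * M :=
  semidiscrete_sup_bound_general d S hS lvl f u M hf hcont hzero heq
end

section
/- Let d ≥ 1, let p ≥ 1 be an integer, K ≥ 0, u ∈ ℝ and U : ℕ^d → ℝ. Assume there is a family of functions v_J, one for each nonempty subset J ⊆ {1,…,d}, where v_J assigns a real number to each tuple (i_j)_{j∈J} of nonnegative integers and satisfies |v_J| ≤ K everywhere, such that for every i ∈ ℕ^d: u − U(i) = Σ_{∅≠J⊆{1,…,d}} v_J((i_j)_{j∈J}) · Π_{j∈J} 2^{−p i_j}. Define S(n) = Σ_{i∈ℕ^d, i_1+⋯+i_d = n} U(i) and the combination solution u_n = (δ^{d−1} S)(n), where δ is the forward difference operator. Then for every n ∈ ℕ: |u − u_n| ≤ (2K/(d−1)!) · ((2^p+1)/2^{p−1})^{d−1} · (n+2(d−1))^{d−1} · 2^{−pn}. -/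
/-!
Put `e_J(i) = v_J(i) ∏_{j ∈ J} 2^{-p i_j}`. As `e_J` only depends on the coordinates in `J`,
adding a coordinate `a ∉ J` to the index set turns the level sums of `e_J` into their partial
sums, and one forward difference undoes this. Hence `δ^{d-1}` of the level sums of `e_J` over
`ℕ^d` is `δ^{|J|-1} a_J` at `n + d - |J|`, where `a_J(k)` is the level sum over `ℕ^J`, while
`δ^{d-1}` of the level sums of the constant `u` is `u`. Thus `u - u_n` is a sum of fewer than
`2^d` terms `δ^{|J|-1} a_J (n + d - |J|)` with `|a_J(k)| ≤ K multichoose(|J|, k) 2^{-pk}`.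
Expanding the differences binomially produces the factor `(1 + 2^{-p})^{|J|-1}`, and all the
multichoose coefficients involved are at most `choose(n + 2(d-1), d-1)`, because binomial
coefficients increase up to the middle.
-/

/-- Forward difference operator: `(fdiff F) n = F (n+1) - F n`. -/
def fdiff (F : ℕ → ℝ) : ℕ → ℝ := fun n => F (n + 1) - F n

/-- The finite set of multi-indices `i ∈ ℕ^d` with `|i|₁ = l`. -/
def levelFinset (d l : ℕ) : Finset (Fin d → ℕ) :=
  (Fintype.piFinset fun _ : Fin d => Finset.range (l + 1)).filter (fun i => ∑ k, i k = l)

open Finset Function fwdDiff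

namespace Finset

variable {ι : Type*} [DecidableEq ι]

lemma piAntidiag_singleton (a : ι) (k : ℕ) : piAntidiag {a} k = {Pi.single a k} := by
  ext f
  simp only [mem_piAntidiag, sum_singleton, mem_singleton, funext_iff, Pi.single_apply]
  grind

lemma card_piAntidiag_nat_eq_multichoose (s : Finset ι) (k : ℕ) :
    #(piAntidiag s k) = (#s).multichoose k := by
  rw [← card_finsuppAntidiag_nat_eq_multichoose, finsuppAntidiag, card_map, card_attach]

lemma sum_piAntidiag_cons_of_dependsOn {M : Type*} [AddCommMonoid M] {a : ι} {s u : Finset ι}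
    (hau : a ∉ u) (has : a ∉ s) {G : (ι → ℕ) → M} (hG : DependsOn G s) (l : ℕ) :
    ∑ i ∈ piAntidiag (cons a u hau) l, G i
      = ∑ p ∈ antidiagonal l, ∑ i ∈ piAntidiag u p.2, G i := by
  rw [piAntidiag_cons, sum_disjiUnion]
  refine sum_congr rfl fun p _ => ?_
  rw [sum_map]
  refine sum_congr rfl fun i _ => hG fun j hj => ?_
  simp [ne_of_mem_of_not_mem hj has]

lemma abs_sum_piAntidiag_mul_prod_pow_le {f : (ι → ℕ) → ℝ} {K ρ : ℝ} (hf : ∀ i, |f i| ≤ K)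
    (hρ : 0 ≤ ρ) (s : Finset ι) (k : ℕ) :
    |∑ i ∈ piAntidiag s k, f i * ∏ j ∈ s, ρ ^ i j| ≤ K * (#s).multichoose k * ρ ^ k := by
  have hterm : ∀ i ∈ piAntidiag s k, |f i * ∏ j ∈ s, ρ ^ i j| ≤ K * ρ ^ k := by
    intro i hi
    rw [prod_pow_eq_pow_sum, (mem_piAntidiag.1 hi).1, abs_mul, abs_of_nonneg (pow_nonneg hρ k)]
    exact mul_le_mul_of_nonneg_right (hf i) (pow_nonneg hρ k)
  calc _ ≤ ∑ i ∈ piAntidiag s k, K * ρ ^ k := (abs_sum_le_sum_abs _ _).trans (sum_le_sum hterm)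
    _ = _ := by rw [sum_const, card_piAntidiag_nat_eq_multichoose, nsmul_eq_mul]; ring

end Finset

section LevelSums

variable {ι M : Type*} [DecidableEq ι] [AddCommGroup M]

lemma fwdDiff_sum_piAntidiag_cons_of_dependsOn {a : ι} {s u : Finset ι} (hau : a ∉ u)
    (has : a ∉ s) {G : (ι → ℕ) → M} (hG : DependsOn G s) (l : ℕ) :
    Δ_[1] (fun l => ∑ i ∈ piAntidiag (cons a u hau) l, G i) l
      = ∑ i ∈ piAntidiag u (l + 1), G i := by
  simp only [fwdDiff, sum_piAntidiag_cons_of_dependsOn hau has hG, Nat.sum_antidiagonal_succ]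
  abel

lemma fwdDiff_iter_sum_piAntidiag_union_of_dependsOn {s t : Finset ι} (hst : Disjoint s t)
    {G : (ι → ℕ) → M} (hG : DependsOn G s) (l : ℕ) :
    (Δ_[1])^[#t] (fun l => ∑ i ∈ piAntidiag (s ∪ t) l, G i) l
      = ∑ i ∈ piAntidiag s (l + #t), G i := by
  induction t using Finset.cons_induction generalizing l with
  | empty => simp
  | cons a t hat ih =>
    have has : a ∉ s := disjoint_left.mp hst.symm (mem_cons_self a t)
    have hast : a ∉ s ∪ t := by simp [has, hat]
    have hunion : s ∪ cons a t hat = cons a (s ∪ t) hast := by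
      simp only [cons_eq_insert, union_insert]
    have hstep : Δ_[1] (fun l => ∑ i ∈ piAntidiag (cons a (s ∪ t) hast) l, G i)
        = fun l => ∑ i ∈ piAntidiag (s ∪ t) (l + 1), G i :=
      funext (fwdDiff_sum_piAntidiag_cons_of_dependsOn hast has hG)
    rw [hunion, card_cons, iterate_succ_apply, hstep,
      fwdDiff_iter_comp_add (f := fun l => ∑ i ∈ piAntidiag (s ∪ t) l, G i),
      ih (hst.mono_right (subset_cons hat)), add_assoc, add_comm 1]

lemma fwdDiff_iter_sum_piAntidiag_of_subset_of_dependsOn {s t : Finset ι} (hs : s.Nonempty)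
    (hst : s ⊆ t) {G : (ι → ℕ) → M} (hG : DependsOn G s) (n : ℕ) :
    (Δ_[1])^[#t - 1] (fun l => ∑ i ∈ piAntidiag t l, G i) n
      = (Δ_[1])^[#s - 1] (fun k => ∑ i ∈ piAntidiag s k, G i) (n + (#t - #s)) := by
  have hcard : #t - 1 = (#s - 1) + #(t \ s) := by
    have := card_le_card hst
    have := hs.card_pos
    rw [card_sdiff_of_subset hst]
    omega
  have hsplit : (Δ_[1])^[#(t \ s)] (fun l => ∑ i ∈ piAntidiag t l, G i)
      = fun l => ∑ i ∈ piAntidiag s (l + #(t \ s)), G i := by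
    funext l
    have := fwdDiff_iter_sum_piAntidiag_union_of_dependsOn
      (disjoint_sdiff : Disjoint s (t \ s)) hG l
    rwa [union_sdiff_of_subset hst] at this
  rw [hcard, iterate_add_apply, hsplit,
    fwdDiff_iter_comp_add (f := fun k => ∑ i ∈ piAntidiag s k, G i), card_sdiff_of_subset hst]

lemma fwdDiff_iter_sum_piAntidiag_const {s : Finset ι} {a : ι} (ha : a ∈ s) (c : M) (n : ℕ) :
    (Δ_[1])^[#s - 1] (fun l => ∑ _i ∈ piAntidiag s l, c) n = c := by
  rw [fwdDiff_iter_sum_piAntidiag_of_subset_of_dependsOn (G := fun _ => c) (singleton_nonempty a)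
    (singleton_subset_iff.2 ha) ((dependsOn_const c).mono (Set.empty_subset _))]
  simp [piAntidiag_singleton]

theorem sub_fwdDiff_iter_sum_piAntidiag_eq_sum [Fintype ι] [Nonempty ι] (u : M)
    (U : (ι → ℕ) → M) (T : Finset (Finset ι)) (hT : ∀ J ∈ T, J.Nonempty)
    (e : Finset ι → (ι → ℕ) → M) (he : ∀ J ∈ T, DependsOn (e J) J)
    (hU : ∀ i, u - U i = ∑ J ∈ T, e J i) (n : ℕ) :
    u - (Δ_[1])^[Fintype.card ι - 1] (fun l => ∑ i ∈ piAntidiag univ l, U i) n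
      = ∑ J ∈ T, (Δ_[1])^[#J - 1] (fun k => ∑ i ∈ piAntidiag J k, e J i)
          (n + (Fintype.card ι - #J)) := by
  have hsum : (fun l => ∑ _i ∈ piAntidiag (univ : Finset ι) l, u)
      = (fun l => ∑ i ∈ piAntidiag univ l, U i)
        + ∑ J ∈ T, fun l => ∑ i ∈ piAntidiag univ l, e J i := by
    funext l
    simp only [Pi.add_apply, Finset.sum_apply]
    rw [sum_comm, ← sum_add_distrib]
    exact sum_congr rfl fun i _ => by rw [← hU i]; abel
  have hΔ := congrFun (congrArg (Δ_[1])^[Fintype.card ι - 1] hsum) n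
  rw [← card_univ, fwdDiff_iter_sum_piAntidiag_const (mem_univ (Classical.arbitrary ι)),
    fwdDiff_iter_add, fwdDiff_iter_finsetSum] at hΔ
  simp only [Pi.add_apply, Finset.sum_apply] at hΔ
  rw [← card_univ, hΔ, add_sub_cancel_left]
  exact sum_congr rfl fun J hJ =>
    fwdDiff_iter_sum_piAntidiag_of_subset_of_dependsOn (hT J hJ) (subset_univ J) (he J hJ) n

end LevelSums

namespace Nat

theorem choose_le_choose_of_le_half_left {n r s : ℕ} (hrs : r ≤ s) (hs : 2 * s ≤ n) :
    n.choose r ≤ n.choose s := by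
  induction s, hrs using Nat.le_induction with
  | base => rfl
  | succ s _ ih => exact (ih (by omega)).trans (choose_le_succ_of_lt_half_left (by omega))

theorem multichoose_le_choose_of_le_half {m k n r : ℕ} (hm : 0 < m) (hmr : m ≤ r + 1)
    (hk : m + k ≤ n + 1) (hr : 2 * r ≤ n) : m.multichoose k ≤ n.choose r := by
  rw [multichoose_eq, choose_symm_of_eq_add (show m + k - 1 = k + (m - 1) by omega)]
  exact (choose_le_choose _ (by omega)).trans (choose_le_choose_of_le_half_left (by omega) hr)

end Nat

theorem abs_fwdDiff_iter_le_of_abs_le_mul_pow {a : ℕ → ℝ} {C ρ : ℝ} {r N : ℕ}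
    (ha : ∀ q ≤ r, |a (N + q)| ≤ C * ρ ^ (N + q)) :
    |(Δ_[1])^[r] a N| ≤ C * ρ ^ N * (1 + ρ) ^ r := by
  rw [fwdDiff_iter_eq_sum_shift, add_comm 1 ρ, add_pow, mul_sum]
  refine (abs_sum_le_sum_abs _ _).trans (sum_le_sum fun q hq => ?_)
  have hq : q ≤ r := Nat.lt_succ_iff.1 (mem_range.1 hq)
  rw [zsmul_eq_mul, abs_mul, smul_eq_mul, mul_one]
  push_cast
  rw [abs_mul, abs_pow, abs_neg, abs_one, one_pow, one_mul, Nat.abs_cast]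
  calc (r.choose q : ℝ) * |a (N + q)| ≤ r.choose q * (C * ρ ^ (N + q)) := by gcongr; exact ha q hq
    _ = C * ρ ^ N * (ρ ^ q * 1 * r.choose q) := by ring

theorem abs_fwdDiff_iter_sum_piAntidiag_mul_prod_pow_le {ι : Type*} [DecidableEq ι]
    {f : (ι → ℕ) → ℝ} {K ρ : ℝ} (hf : ∀ i, |f i| ≤ K) (hρ₀ : 0 ≤ ρ) (hρ₁ : ρ ≤ 1)
    {J : Finset ι} (hJ : J.Nonempty) {d : ℕ} (hJd : #J ≤ d) (n : ℕ) :
    |(Δ_[1])^[#J - 1] (fun k => ∑ i ∈ piAntidiag J k, f i * ∏ j ∈ J, ρ ^ i j) (n + (d - #J))|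
      ≤ K * (n + 2 * (d - 1)).choose (d - 1) * ρ ^ n * (1 + ρ) ^ (d - 1) := by
  have hK : 0 ≤ K := (abs_nonneg _).trans (hf 0)
  have hJ₀ := hJ.card_pos
  refine (abs_fwdDiff_iter_le_of_abs_le_mul_pow
    (C := K * (n + 2 * (d - 1)).choose (d - 1)) (ρ := ρ)
    fun q hq => (abs_sum_piAntidiag_mul_prod_pow_le hf hρ₀ J _).trans ?_).trans ?_
  · gcongr
    exact_mod_cast Nat.multichoose_le_choose_of_le_half hJ₀ (by omega) (by omega) (by omega)
  · have hρn : ρ ^ (n + (d - #J)) ≤ ρ ^ n := pow_le_pow_of_le_one hρ₀ hρ₁ (by omega)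
    have hbinom : (1 + ρ) ^ (#J - 1) ≤ (1 + ρ) ^ (d - 1) :=
      pow_le_pow_right₀ (by linarith) (by omega)
    exact mul_le_mul (mul_le_mul_of_nonneg_left hρn (by positivity)) hbinom (by positivity)
      (by positivity)

lemma fdiff_eq_fwdDiff : fdiff = Δ_[1] := rfl

lemma levelFinset_eq_piAntidiag (d l : ℕ) :
    levelFinset d l = piAntidiag (univ : Finset (Fin d)) l := by
  ext i
  simp only [levelFinset, mem_filter, Fintype.mem_piFinset, mem_range, mem_piAntidiag, mem_univ,
    implies_true, and_true, and_iff_right_iff_imp]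
  exact fun h k => Nat.lt_succ_of_le (h ▸ single_le_sum (by simp) (mem_univ k))

/-- Error bound for the combination technique (Theorem `zweiteOrdnung`). -/
theorem combination_error_bound (d p : ℕ) (hd : 1 ≤ d) (hp : 1 ≤ p)
    (K : ℝ) (hK : 0 ≤ K) (u : ℝ) (U : (Fin d → ℕ) → ℝ)
    (v : Finset (Fin d) → (Fin d → ℕ) → ℝ)
    (hdep : ∀ (J : Finset (Fin d)) (i i' : Fin d → ℕ),
      (∀ j ∈ J, i j = i' j) → v J i = v J i')
    (hbound : ∀ (J : Finset (Fin d)) (i : Fin d → ℕ), |v J i| ≤ K)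
    (hexp : ∀ i : Fin d → ℕ,
      u - U i = ∑ J ∈ Finset.univ.filter (fun J : Finset (Fin d) => J.Nonempty),
        v J i * ∏ j ∈ J, ((1 : ℝ) / 2) ^ (p * i j)) :
    ∀ n : ℕ,
      |u - fdiff^[d - 1] (fun l => ∑ i ∈ levelFinset d l, U i) n|
        ≤ (2 * K / (Nat.factorial (d - 1) : ℝ)) *
            (((2 : ℝ) ^ p + 1) / (2 : ℝ) ^ (p - 1)) ^ (d - 1) *
            ((n : ℝ) + 2 * ((d : ℝ) - 1)) ^ (d - 1) * ((1 : ℝ) / 2) ^ (p * n) := by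
  intro n
  have : Nonempty (Fin d) := ⟨⟨0, hd⟩⟩
  set ρ : ℝ := (1 / 2) ^ p with hρ
  set T := univ.filter fun J : Finset (Fin d) => J.Nonempty
  simp_rw [pow_mul] at hexp ⊢
  have herr := sub_fwdDiff_iter_sum_piAntidiag_eq_sum u U T (fun J hJ => (mem_filter.1 hJ).2)
    (fun J i => v J i * ∏ j ∈ J, ρ ^ i j)
    (fun J _ x y h => congr_arg₂ (· * ·) (hdep J x y h) (prod_congr rfl fun j hj => by rw [h j hj]))
    hexp n
  have hterm J (hJ : J ∈ T) := abs_fwdDiff_iter_sum_piAntidiag_mul_prod_pow_le (ρ := ρ) (hbound J)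
    (by positivity) (pow_le_one₀ (by norm_num) (by norm_num)) (mem_filter.1 hJ).2
    (card_le_univ J |>.trans_eq (Fintype.card_fin d)) n
  have hratio : ((2 : ℝ) ^ p + 1) / 2 ^ (p - 1) = 2 * (1 + ρ) := by
    rw [hρ, div_pow, one_pow, ← pow_sub_one_mul (by omega : p ≠ 0)]
    field_simp
  have hcast : ((n + 2 * (d - 1) : ℕ) : ℝ) = n + 2 * ((d : ℝ) - 1) := by
    push_cast [Nat.cast_sub hd]
    ring
  calc |u - fdiff^[d - 1] (fun l => ∑ i ∈ levelFinset d l, U i) n|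
      ≤ ∑ J ∈ T, |(Δ_[1])^[#J - 1] (fun k => ∑ i ∈ piAntidiag J k, v J i * ∏ j ∈ J, ρ ^ i j)
          (n + (d - #J))| := by
        simp only [fdiff_eq_fwdDiff, levelFinset_eq_piAntidiag, Fintype.card_fin] at herr ⊢
        exact herr ▸ abs_sum_le_sum_abs _ _
    _ ≤ #T • (K * (n + 2 * (d - 1)).choose (d - 1) * ρ ^ n * (1 + ρ) ^ (d - 1)) :=
        sum_le_card_nsmul _ _ _ hterm
    _ ≤ 2 ^ d * (K * ((n + 2 * (d - 1) : ℕ) ^ (d - 1) / (d - 1).factorial) * ρ ^ n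
          * (1 + ρ) ^ (d - 1)) := by
        rw [nsmul_eq_mul]
        gcongr
        · exact_mod_cast (card_filter_le _ _).trans_eq (by simp)
        · exact Nat.choose_le_pow_div _ _
    _ = _ := by
        rw [hratio, mul_pow, hcast, ← pow_sub_one_mul (by omega : d ≠ 0)]
        ring
end
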